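/- Let A ∈ ℝ^{n×n×s} with ξ(A) of spectral radius less than 1, B ∈ ℝ^{n×m×s}, and let W_c solve the T-Lyapunov equation W_c − A⊛W_c⊛A^T = B⊛B^T. Then ξ(W_c) equals the controllability Gramian of the linear system (ξ(A), ξ(B)), i.e., ξ(W_c) = Σ_{k=0}^{∞} ξ(A)^k ξ(B)ξ(B)^T (ξ(A)^T)^k, and ξ(W_c) is positive semidefinite. -/

import Mathlib

open scoped Matrix
/-- A third-order tensor of size `n × m × s` is represented by its `s` frontal slices. -/
abbrev Tensor3 (n m s : ℕ) := ZMod s → Matrix (Fin n) (Fin m) ℝ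

/-- The block circulant operator `ξ`: the `(i, j)` block is the frontal slice `A_{i - j mod s}`. -/
def bcirc {n m s : ℕ} (A : Tensor3 n m s) :
    Matrix (ZMod s × Fin n) (ZMod s × Fin m) ℝ :=
  fun p q => A (p.1 - q.1) p.2 q.2

/-- The T-product `A ⊛ B = μ⁻¹(ξ(A) · μ(B))`, whose `k`-th frontal slice is the circular
convolution `∑ⱼ A_{k-j} · B_j` of the frontal slices. -/
def tProd {n m h s : ℕ} [NeZero s] (A : Tensor3 n m s) (B : Tensor3 m h s) :
    Tensor3 n h s :=
  fun k => ∑ j : ZMod s, A (k - j) * B j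


/-- The T-transpose: each frontal slice is transposed and the order of slices 2,…,s reversed. -/
def tTrans {n m s : ℕ} (A : Tensor3 n m s) : Tensor3 m n s :=
  fun k => (A (-k))ᵀ

/-- The T-identity tensor: first frontal slice the identity matrix, the others zero. -/
def tId (n s : ℕ) : Tensor3 n n s :=
  fun k => if k = 0 then 1 else 0

/-- `k`-fold T-product power of a tensor, `A^0 = I`. -/
def tPow {n s : ℕ} [NeZero s] (A : Tensor3 n n s) : ℕ → Tensor3 n n s
  | 0 => tId n s
  | k + 1 => tProd A (tPow A k)

/-!
Since `ξ` is a ring homomorphism commuting with transposition, `X = ξ(W)` solves the Stein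
equation `X - M X Mᵀ = S` with `M = ξ(A)` and `S = ξ(B) ξ(B)ᵀ`. Telescoping gives
`∑_{k<N} Mᵏ S (Mᵀ)ᵏ = X - Mᴺ X (Mᵀ)ᴺ`. By Gelfand's formula `‖Mᵏ‖` decays geometrically when the
spectral radius of `M` is below `1`, so the series converges absolutely and the remainder tends
to `0`. Every term `(Mᵏ ξ(B)) (Mᵏ ξ(B))ᵀ` is positive semidefinite, and this passes to the limit.
-/

open Filter Topology
open scoped NNReal ENNReal

theorem eventually_nnnorm_pow_le_of_spectralRadius_lt {A : Type*} [NormedRing A]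
    [NormedAlgebra ℂ A] [CompleteSpace A] (a : A) {r : ℝ≥0} (h : spectralRadius ℂ a < r) :
    ∀ᶠ k in atTop, ‖a ^ k‖₊ ≤ r ^ k := by
  have hgelfand := spectrum.pow_nnnorm_pow_one_div_tendsto_nhds_spectralRadius a
  filter_upwards [hgelfand.eventually_lt_const h, eventually_gt_atTop 0] with k hk hk0
  rw [one_div, ENNReal.rpow_inv_lt_iff (by positivity), ENNReal.rpow_natCast] at hk
  exact_mod_cast hk.le

theorem summable_norm_pow_of_spectralRadius_lt_one {A : Type*} [NormedRing A] [NormedAlgebra ℂ A]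
    [CompleteSpace A] (a : A) (h : spectralRadius ℂ a < 1) : Summable fun k => ‖a ^ k‖ := by
  obtain ⟨r, hr, hr1⟩ := ENNReal.lt_iff_exists_nnreal_btwn.mp h
  have hgeom := summable_geometric_of_lt_one r.2 (by exact_mod_cast hr1)
  refine .of_norm_bounded_eventually_nat hgeom ?_
  filter_upwards [eventually_nnnorm_pow_le_of_spectralRadius_lt a hr] with k hk
  simpa using (NNReal.coe_le_coe.mpr hk)

theorem Matrix.sum_range_pow_mul_mul_transpose_pow {ι R : Type*} [Fintype ι] [DecidableEq ι]
    [CommRing R] {M X S : Matrix ι ι R} (h : X - M * X * Mᵀ = S) (N : ℕ) :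
    ∑ k ∈ Finset.range N, M ^ k * S * Mᵀ ^ k = X - M ^ N * X * Mᵀ ^ N := by
  subst h
  induction N with
  | zero => simp
  | succ N ih =>
    rw [Finset.sum_range_succ, ih, pow_succ, pow_succ']
    simp only [Matrix.mul_sub, Matrix.sub_mul, Matrix.mul_assoc]
    abel

theorem Matrix.PosSemidef.of_hasSum {α n R : Type*} [Fintype n] [Ring R] [PartialOrder R]
    [StarRing R] [TopologicalSpace R] [IsTopologicalRing R] [ContinuousStar R]
    [IsOrderedAddMonoid R] [OrderClosedTopology R] {f : α → Matrix n n R} {X : Matrix n n R}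
    (hf : HasSum f X) (hpos : ∀ a, (f a).PosSemidef) : X.PosSemidef := by
  refine .of_dotProduct_mulVec_nonneg ?_ fun x => ?_
  · have hH : HasSum f Xᴴ := by
      simpa only [(hpos _).isHermitian.eq] using hf.matrix_conjTranspose
    exact hH.unique hf
  · let q : Matrix n n R →+ R :=
      AddMonoidHom.mk' (fun Y => star x ⬝ᵥ (Y *ᵥ x)) fun Y Z => by
        simp [Matrix.add_mulVec, dotProduct_add]
    have hq : Continuous q :=
      continuous_const.dotProduct (continuous_id.matrix_mulVec continuous_const)
    exact (hf.map q hq).nonneg fun a => (hpos a).dotProduct_mulVec_nonneg x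

section Frobenius

/- The Frobenius norm is used because it is submultiplicative, invariant under transposition and
preserved by the entrywise embedding `ℝ → ℂ`. -/

attribute [local instance] Matrix.frobeniusNormedRing Matrix.frobeniusNormedAlgebra

theorem Matrix.summable_frobenius_norm_pow {ι : Type*} [Fintype ι] [DecidableEq ι]
    (M : Matrix ι ι ℝ) (h : spectralRadius ℂ (M.map (fun x => (x : ℂ))) < 1) :
    Summable fun k => ‖M ^ k‖ := by
  have : CompleteSpace (Matrix ι ι ℂ) := FiniteDimensional.complete ℂ _
  convert summable_norm_pow_of_spectralRadius_lt_one _ h using 2 with k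
  rw [← Matrix.frobenius_norm_map_eq (M ^ k) ((↑) : ℝ → ℂ) Complex.norm_real]
  exact congrArg norm (Matrix.map_pow M Complex.ofRealHom k)

theorem Matrix.hasSum_pow_mul_mul_transpose_pow {ι : Type*} [Fintype ι] [DecidableEq ι]
    {M X S : Matrix ι ι ℝ} (hM : Summable fun k => ‖M ^ k‖) (h : X - M * X * Mᵀ = S) :
    HasSum (fun k => M ^ k * S * Mᵀ ^ k) X := by
  have hnorm : Tendsto (‖M ^ ·‖) atTop (𝓝 0) := hM.tendsto_atTop_zero
  have hpow : Tendsto (M ^ ·) atTop (𝓝 0) := tendsto_zero_iff_norm_tendsto_zero.mpr hnorm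
  have hsumm : Summable fun k => ‖M ^ k * S * Mᵀ ^ k‖ := by
    refine .of_norm_bounded_eventually_nat (hM.mul_left ‖S‖) ?_
    filter_upwards [hnorm.eventually (ge_mem_nhds zero_lt_one)] with k hk
    calc ‖‖M ^ k * S * Mᵀ ^ k‖‖ = ‖M ^ k * S * (M ^ k)ᵀ‖ := by
          rw [norm_norm, Matrix.transpose_pow]
      _ ≤ ‖M ^ k‖ * ‖S‖ * ‖(M ^ k)ᵀ‖ := norm_mul₃_le
      _ = ‖S‖ * ‖M ^ k‖ * ‖M ^ k‖ := by rw [Matrix.frobenius_norm_transpose]; ring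
      _ ≤ ‖S‖ * ‖M ^ k‖ := mul_le_of_le_one_right (by positivity) hk
  have htail : Tendsto (fun N => M ^ N * X * Mᵀ ^ N) atTop (𝓝 0) := by
    have hT := (continuous_id.matrix_transpose.tendsto 0).comp hpow
    simpa [Function.comp_def, Matrix.transpose_pow] using (hpow.mul_const X).mul hT
  refine (hasSum_iff_tendsto_nat_of_summable_norm hsumm).mpr ?_
  have hlim := (tendsto_const_nhds (x := X)).sub htail
  rw [sub_zero] at hlim
  simp only [Matrix.sum_range_pow_mul_mul_transpose_pow h]
  exact hlim

end Frobenius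

theorem bcirc_sub {n m s : ℕ} (X Y : Tensor3 n m s) : bcirc (X - Y) = bcirc X - bcirc Y := rfl

theorem bcirc_tTrans {n m s : ℕ} (A : Tensor3 n m s) : bcirc (tTrans A) = (bcirc A)ᵀ := by
  ext ⟨i, p⟩ ⟨j, q⟩
  simp only [bcirc, tTrans, Matrix.transpose_apply, neg_sub]

theorem bcirc_tProd {n m h s : ℕ} [NeZero s] (A : Tensor3 n m s) (B : Tensor3 m h s) :
    bcirc (tProd A B) = bcirc A * bcirc B := by
  ext ⟨i, p⟩ ⟨j, q⟩
  simp only [bcirc, tProd, Matrix.mul_apply, Matrix.sum_apply, Fintype.sum_prod_type]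
  exact Fintype.sum_equiv (Equiv.addRight j) _ _ fun c => by
    simp only [Equiv.coe_addRight, add_sub_cancel_right, sub_add_eq_sub_sub_swap]

/-- If `W` solves the T-Lyapunov equation, then `ξ(W)` is the controllability Gramian of the
unfolded linear system `(ξ(A), ξ(B))`, and it is positive semidefinite. -/
theorem bcirc_tLyapunov_solution {n m s : ℕ} [NeZero s]
    (A : Tensor3 n n s) (B : Tensor3 n m s) (W : Tensor3 n n s)
    (hA : spectralRadius ℂ ((bcirc A).map (fun x => (x : ℂ))) < 1)
    (hW : W - tProd (tProd A W) (tTrans A) = tProd B (tTrans B)) :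
    HasSum (fun k : ℕ => bcirc A ^ k * bcirc B * (bcirc B)ᵀ * ((bcirc A)ᵀ) ^ k) (bcirc W) ∧
      (bcirc W).PosSemidef := by
  have hStein : bcirc W - bcirc A * bcirc W * (bcirc A)ᵀ = bcirc B * (bcirc B)ᵀ := by
    simpa only [bcirc_sub, bcirc_tProd, bcirc_tTrans] using congrArg bcirc hW
  have hsum :=
    Matrix.hasSum_pow_mul_mul_transpose_pow (Matrix.summable_frobenius_norm_pow _ hA) hStein
  simp only [← Matrix.mul_assoc] at hsum
  refine ⟨hsum, .of_hasSum hsum fun k => ?_⟩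
  simpa [Matrix.mul_assoc, Matrix.transpose_pow] using
    Matrix.posSemidef_self_mul_conjTranspose (bcirc A ^ k * bcirc B)
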